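/- arXiv:2405.12051 — 2 statements merged into one kernel-verified Lean document; each statement's English description precedes it below -/
import Mathlib

section
/- If a sequence of convex functions Pᵢ : ℝ → ℝ converges pointwise to a convex function P : ℝ → ℝ, then for every α in the interior of the domain of the Legendre–Fenchel transform P* of P, the transforms converge: lim_{i→∞} Pᵢ*(α) = P*(α), where Q*(α) = inf_{q∈ℝ}(Q(q) − qα). -/
/-!
Subtracting the linear term, the claim becomes: if convex `fᵢ → f` pointwise and `f` grows at
least linearly at `±∞` (which is what `α ∈ interior (dom P*)` provides), then `inf fᵢ → inf f`.
The upper bound is immediate from pointwise convergence at a near-minimiser. For the lower bound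
pick `a < 0 < b` with `f a, f b > f 0`; eventually the same holds for `fᵢ`, and convexity then
puts the infimum of `fᵢ` on `[a, b]`. There `fᵢ → f` uniformly: the slopes of `fᵢ` on `[a, b]`
are squeezed between its secant slopes on `[a - 1, a]` and `[b, b + 1]`, which converge, so the
`fᵢ` are eventually equi-Lipschitz on `[a, b]`.
-/

open Set Filter Topology NNReal

theorem ConvexOn.slope_le_slope {𝕜 : Type*} [Field 𝕜] [LinearOrder 𝕜] [IsStrictOrderedRing 𝕜]
    {s : Set 𝕜} {g : 𝕜 → 𝕜} (hg : ConvexOn 𝕜 s g) {u v x y : 𝕜} (hu : u ∈ s) (hv : v ∈ s)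
    (hx : x ∈ s) (hy : y ∈ s) (huv : u < v) (hvx : v ≤ x) (hxy : x < y) :
    slope g u v ≤ slope g x y :=
  calc slope g u v = slope g v u := slope_comm g u v
    _ ≤ slope g v y := hg.slope_mono hv ⟨hu, huv.ne⟩ ⟨hy, (hvx.trans_lt hxy).ne'⟩
        (huv.le.trans (hvx.trans hxy.le))
    _ = slope g y v := slope_comm g v y
    _ ≤ slope g y x := hg.slope_mono hy ⟨hv, (hvx.trans_lt hxy).ne⟩ ⟨hx, hxy.ne⟩ hvx
    _ = slope g x y := slope_comm g y x

theorem ConvexOn.lipschitzOnWith_Icc {g : ℝ → ℝ} (hg : ConvexOn ℝ univ g) {a b a' b' : ℝ}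
    {L : ℝ≥0} (ha' : a' < a) (hb' : b < b') (hL₁ : -(L : ℝ) ≤ slope g a' a)
    (hL₂ : slope g b b' ≤ L) : LipschitzOnWith L g (Icc a b) := by
  refine LipschitzOnWith.of_le_add_mul L fun x hx y hy => ?_
  rcases lt_trichotomy x y with hxy | rfl | hyx
  · have h := hL₁.trans (hg.slope_le_slope trivial trivial trivial trivial ha' hx.1 hxy)
    rw [slope_def_field, le_div_iff₀ (sub_pos.2 hxy)] at h
    rw [Real.dist_eq, abs_of_neg (sub_neg.2 hxy)]
    linarith
  · simp
  · have h := (hg.slope_le_slope trivial trivial trivial trivial hyx hx.2 hb').trans hL₂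
    rw [slope_def_field, div_le_iff₀ (sub_pos.2 hyx)] at h
    rw [Real.dist_eq, abs_of_pos (sub_pos.2 hyx)]
    linarith

theorem tendstoUniformlyOn_of_lipschitzOnWith {ι α β : Type*} [PseudoMetricSpace α]
    [PseudoMetricSpace β] {l : Filter ι} {F : ι → α → β} {f : α → β} {K : Set α} {L : ℝ≥0}
    (hK : IsCompact K) (hF : ∀ᶠ i in l, LipschitzOnWith L (F i) K) (hf : LipschitzOnWith L f K)
    (hconv : ∀ x ∈ K, Tendsto (fun i => F i x) l (𝓝 (f x))) : TendstoUniformlyOn F f l K := by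
  rw [Metric.tendstoUniformlyOn_iff]
  intro ε hε
  set δ := ε / (3 * (L + 1)) with hδ
  have hδ_pos : 0 < δ := by positivity
  have hLδ : L * δ < ε / 3 := by
    rw [hδ, mul_div_assoc', div_lt_div_iff₀ (by positivity) (by positivity)]
    nlinarith [L.coe_nonneg]
  obtain ⟨T, hTK, hT, hcover⟩ := finite_cover_balls_of_compact hK hδ_pos
  have hnet : ∀ᶠ i in l, ∀ t ∈ T, dist (f t) (F i t) < ε / 3 :=
    hT.eventually_all.2 fun t ht => by
      simpa only [dist_comm] using Metric.tendsto_nhds.1 (hconv t (hTK ht)) _ (by positivity)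
  filter_upwards [hF, hnet] with i hFi hi x hx
  obtain ⟨t, ht, hxt⟩ := mem_iUnion₂.1 (hcover hx)
  have hxt' : dist x t ≤ δ := (Metric.mem_ball.1 hxt).le
  calc dist (f x) (F i x)
      ≤ dist (f x) (f t) + dist (f t) (F i t) + dist (F i t) (F i x) := dist_triangle4 _ _ _ _
    _ ≤ L * δ + dist (f t) (F i t) + L * δ := by
        gcongr
        · exact (hf.dist_le_mul x hx t (hTK ht)).trans (by gcongr)
        · exact (hFi.dist_le_mul t (hTK ht) x hx).trans (by rw [dist_comm]; gcongr)
    _ < ε := by linarith [hi t ht]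

theorem tendstoUniformlyOn_Icc_of_convexOn {ι : Type*} {l : Filter ι} {F : ι → ℝ → ℝ}
    {f : ℝ → ℝ} (hF : ∀ i, ConvexOn ℝ univ (F i)) (hf : ConvexOn ℝ univ f)
    (hconv : ∀ x, Tendsto (fun i => F i x) l (𝓝 (f x))) (a b : ℝ) :
    TendstoUniformlyOn F f l (Icc a b) := by
  have hslope : ∀ x y, Tendsto (fun i => slope (F i) x y) l (𝓝 (slope f x y)) := fun x y => by
    simp only [slope_def_field]
    exact ((hconv y).sub (hconv x)).div_const _
  set L : ℝ≥0 := ⟨|slope f (a - 1) a| + |slope f b (b + 1)| + 1, by positivity⟩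
  have hL₁ : -(L : ℝ) < slope f (a - 1) a := by
    change -(_ + _ + _) < _
    linarith [neg_abs_le (slope f (a - 1) a), abs_nonneg (slope f b (b + 1))]
  have hL₂ : slope f b (b + 1) < L := by
    change _ < _ + _ + _
    linarith [le_abs_self (slope f b (b + 1)), abs_nonneg (slope f (a - 1) a)]
  refine tendstoUniformlyOn_of_lipschitzOnWith isCompact_Icc ?_
    (hf.lipschitzOnWith_Icc (sub_one_lt a) (lt_add_one b) hL₁.le hL₂.le) fun x _ => hconv x
  filter_upwards [(hslope _ _).eventually_const_lt hL₁, (hslope _ _).eventually_lt_const hL₂]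
    with i hi₁ hi₂
  exact (hF i).lipschitzOnWith_Icc (sub_one_lt a) (lt_add_one b) hi₁.le hi₂.le

theorem ConvexOn.exists_mem_Icc_le {g : ℝ → ℝ} (hg : ConvexOn ℝ univ g) {a b x₀ : ℝ}
    (hx₀ : x₀ ∈ Icc a b) (ha : g x₀ < g a) (hb : g x₀ < g b) (x : ℝ) :
    ∃ y ∈ Icc a b, g y ≤ g x := by
  rcases lt_or_ge x a with hxa | hax
  · refine ⟨a, left_mem_Icc.2 (hx₀.1.trans hx₀.2), ?_⟩
    have := hg.le_max_of_mem_Icc trivial trivial ⟨hxa.le, hx₀.1⟩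
    exact (le_max_iff.1 this).resolve_right ha.not_ge
  rcases le_or_gt x b with hxb | hbx
  · exact ⟨x, ⟨hax, hxb⟩, le_rfl⟩
  · refine ⟨b, right_mem_Icc.2 (hx₀.1.trans hx₀.2), ?_⟩
    have := hg.le_max_of_mem_Icc trivial trivial ⟨hx₀.2, hbx.le⟩
    exact (le_max_iff.1 this).resolve_left hb.not_ge

theorem eventually_forall_sub_le_of_convexOn {ι : Type*} {l : Filter ι} {F : ι → ℝ → ℝ}
    {f : ℝ → ℝ} (hF : ∀ i, ConvexOn ℝ univ (F i)) (hf : ConvexOn ℝ univ f)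
    (hconv : ∀ x, Tendsto (fun i => F i x) l (𝓝 (f x))) (hbot : Tendsto f atBot atTop)
    (htop : Tendsto f atTop atTop) {m : ℝ} (hm : ∀ x, m ≤ f x) {ε : ℝ} (hε : 0 < ε) :
    ∀ᶠ i in l, ∀ x, m - ε ≤ F i x := by
  obtain ⟨a, hfa, ha⟩ := ((hbot.eventually_gt_atTop (f 0)).and (eventually_le_atBot 0)).exists
  obtain ⟨b, hfb, hb⟩ := ((htop.eventually_gt_atTop (f 0)).and (eventually_ge_atTop 0)).exists
  have hunif := Metric.tendstoUniformlyOn_iff.1 (tendstoUniformlyOn_Icc_of_convexOn hF hf hconv a b)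
  filter_upwards [(hconv 0).eventually_lt (hconv a) hfa, (hconv 0).eventually_lt (hconv b) hfb,
    hunif ε hε] with i hia hib hi x
  obtain ⟨y, hy, hyx⟩ := (hF i).exists_mem_Icc_le ⟨ha, hb⟩ hia hib x
  have hclose := (abs_lt.1 (Real.dist_eq _ _ ▸ hi y hy)).2
  linarith [hm y]

theorem tendsto_sInf_range_of_eventually_le {ι α : Type*} [Nonempty α] {l : Filter ι}
    {F : ι → α → ℝ} {f : α → ℝ} (hconv : ∀ x, Tendsto (fun i => F i x) l (𝓝 (f x)))
    (hlow : ∀ ε > 0, ∀ᶠ i in l, ∀ x, sInf (range f) - ε ≤ F i x) :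
    Tendsto (fun i => sInf (range (F i))) l (𝓝 (sInf (range f))) := by
  refine tendsto_order.2 ⟨fun c hc => ?_, fun c hc => ?_⟩
  · filter_upwards [hlow _ (half_pos (sub_pos.2 hc))] with i hi
    calc c < sInf (range f) - (sInf (range f) - c) / 2 := by linarith
      _ ≤ sInf (range (F i)) := le_csInf (range_nonempty _) (forall_mem_range.2 hi)
  · obtain ⟨_, ⟨x, rfl⟩, hx⟩ := exists_lt_of_csInf_lt (range_nonempty f) hc
    filter_upwards [hlow 1 one_pos, (hconv x).eventually_lt_const hx] with i hi hix
    exact (csInf_le ⟨_, forall_mem_range.2 hi⟩ (mem_range_self x)).trans_lt hix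

theorem tendsto_atTop_sub_mul_of_bddBelow {g : ℝ → ℝ} {α β : ℝ}
    (hg : BddBelow (range fun q => g q - q * β)) (hαβ : α < β) :
    Tendsto (fun q => g q - q * α) atTop atTop := by
  obtain ⟨c, hc⟩ := hg
  refine tendsto_atTop_mono (fun q => ?_)
    (tendsto_atTop_add_const_left _ c (tendsto_id.atTop_mul_const (sub_pos.2 hαβ)))
  have hq : c ≤ g q - q * β := hc (mem_range_self q)
  simp only [id]
  linarith

theorem tendsto_atBot_sub_mul_of_bddBelow {g : ℝ → ℝ} {α β : ℝ}
    (hg : BddBelow (range fun q => g q - q * β)) (hβα : β < α) :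
    Tendsto (fun q => g q - q * α) atBot atTop := by
  obtain ⟨c, hc⟩ := hg
  refine tendsto_atTop_mono (fun q => ?_)
    (tendsto_atTop_add_const_left _ c (tendsto_id.atBot_mul_const_of_neg (sub_neg.2 hβα)))
  have hq : c ≤ g q - q * β := hc (mem_range_self q)
  simp only [id]
  linarith

theorem ConvexOn.sub_mul_const {g : ℝ → ℝ} (hg : ConvexOn ℝ univ g) (α : ℝ) :
    ConvexOn ℝ univ fun q => g q - q * α :=
  hg.sub (((LinearMap.mul ℝ ℝ).flip α).concaveOn convex_univ)

/-- If a sequence of (finite) convex functions `Pᵢ : ℝ → ℝ` converges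
pointwise to a convex function `P : ℝ → ℝ`, then at every interior point `α` of the
domain of the Legendre–Fenchel transform `P*`, one has `Pᵢ*(α) → P*(α)`, where
`Q*(α) = inf_q (Q(q) − q·α)`. -/
theorem legendre_fenchel_converges (P : ℕ → ℝ → ℝ) (Q : ℝ → ℝ)
    (hP : ∀ i, ConvexOn ℝ Set.univ (P i)) (hQ : ConvexOn ℝ Set.univ Q)
    (hconv : ∀ q : ℝ, Filter.Tendsto (fun i => P i q) Filter.atTop (nhds (Q q)))
    (α : ℝ)
    (hα : α ∈ interior {a : ℝ | BddBelow (Set.range fun q => Q q - q * a)}) :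
    Filter.Tendsto (fun i => sInf (Set.range fun q => P i q - q * α)) Filter.atTop
      (nhds (sInf (Set.range fun q => Q q - q * α))) := by
  have hdom := mem_interior_iff_mem_nhds.1 hα
  have hbdd : BddBelow (range fun q => Q q - q * α) :=
    interior_subset (s := {a : ℝ | BddBelow (range fun q => Q q - q * a)}) hα
  obtain ⟨β, hβα, hβ⟩ := Eventually.exists_lt hdom
  obtain ⟨γ, hαγ, hγ⟩ := Eventually.exists_gt hdom
  have hconv' (q : ℝ) : Tendsto (fun i => P i q - q * α) atTop (𝓝 (Q q - q * α)) :=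
    (hconv q).sub_const _
  refine tendsto_sInf_range_of_eventually_le hconv' fun ε hε => ?_
  exact eventually_forall_sub_le_of_convexOn (fun i => (hP i).sub_mul_const α)
    (hQ.sub_mul_const α) hconv' (tendsto_atBot_sub_mul_of_bddBelow hβ hβα)
    (tendsto_atTop_sub_mul_of_bddBelow hγ hαγ) (fun q => csInf_le hbdd (mem_range_self q)) hε
end

section
/- Entropy Distribution Principle: Let f be a continuous map on a metric space X and Y ⊆ X. Suppose there exist constants h ≥ 0, δ > 0, a Borel probability measure μ with μ(Y) > 0, and n₀ ∈ ℕ such that μ(B_n(x,δ)) ≤ e^{−n·h} for every n ≥ n₀ and every Bowen ball B_n(x,δ) intersecting Y. Then the Bowen topological entropy of f on Y at scale δ satisfies h_top(f,Y,δ) ≥ h. -/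
open scoped ENNReal

open MeasureTheory

/-! The measure `μ` is a mass distribution: every Bowen cover of `Y` by balls of order `nᵢ ≥ n₀`
has weight `Σᵢ e^{−h·nᵢ} ≥ Σᵢ μ(Y ∩ B_{nᵢ}(xᵢ,δ)) ≥ μ(Y) > 0`, so `m_{δ,h}(Y) > 0`. Since
`m_{δ,h'}(Y)` decreases in `h'`, it vanishes for no `h' < h`, whence `h_top(f,Y,δ) ≥ h`. -/

/-- The `(n,δ)`-Bowen ball centered at `x`. -/
def bowenBall {X : Type*} [MetricSpace X] (f : X → X) (n : ℕ) (x : X) (ε : ℝ) : Set X :=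
  {y | ∀ j < n, dist (f^[j] x) (f^[j] y) < ε}

/-- The Carathéodory set function
`m_{ε,h}(Y) = lim_{N→∞} inf{ Σᵢ e^{−h·nᵢ} : Y ⊆ ⋃ᵢ B_{nᵢ}(xᵢ,ε), nᵢ ≥ N }`. -/
noncomputable def bowenM {X : Type*} [MetricSpace X] (f : X → X) (Y : Set X)
    (ε h : ℝ) : ℝ≥0∞ :=
  ⨆ N : ℕ, ⨅ (c : ℕ → X) (n : ℕ → ℕ)
    (_ : (∀ i, N ≤ n i) ∧ Y ⊆ ⋃ i, bowenBall f (n i) (c i) ε),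
      ∑' i, ENNReal.ofReal (Real.exp (-h * n i))

/-- The critical exponent `h_top(f,Y,ε) = inf{h ≥ 0 : m_{ε,h}(Y) = 0}`. -/
noncomputable def bowenEntScale {X : Type*} [MetricSpace X] (f : X → X) (Y : Set X)
    (ε : ℝ) : ℝ≥0∞ :=
  sInf {H : ℝ≥0∞ | ∃ h : ℝ, 0 ≤ h ∧ H = ENNReal.ofReal h ∧ bowenM f Y ε h = 0}

section BowenEntropy

variable {X : Type*} [MetricSpace X] (f : X → X) (Y : Set X) (ε : ℝ)

theorem bowenM_antitone : Antitone (bowenM f Y ε) := by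
  intro h₁ h₂ h₁₂
  refine iSup_mono fun N => iInf_mono fun c => iInf_mono fun n => iInf_mono fun _ =>
    ENNReal.tsum_le_tsum fun i => ENNReal.ofReal_le_ofReal (Real.exp_le_exp.mpr ?_)
  exact mul_le_mul_of_nonneg_right (neg_le_neg h₁₂) (Nat.cast_nonneg _)

theorem ofReal_le_bowenEntScale {h : ℝ} (hM : bowenM f Y ε h ≠ 0) :
    ENNReal.ofReal h ≤ bowenEntScale f Y ε := by
  refine le_sInf ?_
  rintro _ ⟨h', -, rfl, hM'⟩
  refine ENNReal.ofReal_le_ofReal (le_of_not_gt fun hlt => hM ?_)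
  exact le_antisymm (hM' ▸ bowenM_antitone f Y ε hlt.le) zero_le

theorem measure_le_bowenM [MeasurableSpace X] (μ : Measure X) {h : ℝ} (n₀ : ℕ)
    (hball : ∀ n, n₀ ≤ n → ∀ x : X, (bowenBall f n x ε ∩ Y).Nonempty →
      μ (bowenBall f n x ε) ≤ ENNReal.ofReal (Real.exp (-h * n))) :
    μ Y ≤ bowenM f Y ε h := by
  refine le_trans ?_ (le_iSup _ n₀)
  refine le_iInf fun c => le_iInf fun n => le_iInf fun ⟨hn, hcover⟩ => ?_
  have hY_cover : Y ⊆ ⋃ i, Y ∩ bowenBall f (n i) (c i) ε := fun y hy =>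
    Set.mem_iUnion.mpr ((Set.mem_iUnion.mp (hcover hy)).imp fun _ hi => ⟨hy, hi⟩)
  have hpiece : ∀ i, μ (Y ∩ bowenBall f (n i) (c i) ε) ≤
      ENNReal.ofReal (Real.exp (-h * n i)) := by
    intro i
    rcases (bowenBall f (n i) (c i) ε ∩ Y).eq_empty_or_nonempty with hempty | hne
    · rw [Set.inter_comm, hempty, measure_empty]
      exact zero_le
    · exact (measure_mono Set.inter_subset_right).trans (hball _ (hn i) _ hne)
  calc μ Y ≤ ∑' i, μ (Y ∩ bowenBall f (n i) (c i) ε) :=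
        (measure_mono hY_cover).trans (measure_iUnion_le _)
    _ ≤ _ := ENNReal.tsum_le_tsum hpiece

end BowenEntropy

theorem entropy_distribution_principle_general {X : Type*} [MetricSpace X] [MeasurableSpace X]
    (f : X → X) (Y : Set X)
    (h δ : ℝ)
    (μ : MeasureTheory.Measure X)
    (hY : 0 < μ Y) (n₀ : ℕ)
    (hball : ∀ n, n₀ ≤ n → ∀ x : X, (bowenBall f n x δ ∩ Y).Nonempty →
      μ (bowenBall f n x δ) ≤ ENNReal.ofReal (Real.exp (-h * n))) :
    ENNReal.ofReal h ≤ bowenEntScale f Y δ :=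
  ofReal_le_bowenEntScale f Y δ (hY.trans_le (measure_le_bowenM f Y δ μ n₀ hball)).ne'

/-- Entropy Distribution Principle: if a Borel probability measure `μ`
satisfies `μ(Y) > 0` and `μ(B_n(x,δ)) ≤ e^{−n·h}` for all `n ≥ n₀` and all Bowen balls
`B_n(x,δ)` intersecting `Y`, then `h_top(f,Y,δ) ≥ h`. -/
theorem entropy_distribution_principle {X : Type*} [MetricSpace X] [MeasurableSpace X]
    [BorelSpace X] (f : X → X) (hf : Continuous f) (Y : Set X)
    (h δ : ℝ) (hh : 0 ≤ h) (hδ : 0 < δ)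
    (μ : MeasureTheory.Measure X) [MeasureTheory.IsProbabilityMeasure μ]
    (hY : 0 < μ Y) (n₀ : ℕ)
    (hball : ∀ n, n₀ ≤ n → ∀ x : X, (bowenBall f n x δ ∩ Y).Nonempty →
      μ (bowenBall f n x δ) ≤ ENNReal.ofReal (Real.exp (-h * n))) :
    ENNReal.ofReal h ≤ bowenEntScale f Y δ :=
  entropy_distribution_principle_general f Y h δ μ hY n₀ hball
end
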